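/- Let A be a twisted R-algebra and B := S^{-1}A a twisted localization of A. Then for every n ∈ ℕ there are natural ring isomorphisms P_{B,(n)} ≅ P_B ⊗_{P_A} P_{A,(n)} ≅ B ⊗_A P_{A,(n)} ⊗_A B, where P_{A,(n)} is regarded as an (A,A)-bimodule via the left structure a ↦ a ⊗ 1 and the right structure a ↦ 1 ⊗ a. -/

import Mathlib

open TensorProduct

noncomputable section

/-- The augmentation ideal `I_A ⊆ P_A = A ⊗[R] A`: the kernel of the
multiplication map `a ⊗ b ↦ a * b`. -/
def diagIdeal (R A : Type*) [CommRing R] [CommRing A] [Algebra R A] :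
    Ideal (A ⊗[R] A) :=
  RingHom.ker (Algebra.TensorProduct.lmul' R (S := A))

/-- The endomorphism `σ = σ_A ⊗ id` of `P_A = A ⊗[R] A`. -/
def sigmaP (R A : Type*) [CommRing R] [CommRing A] [Algebra R A]
    (σ : A →ₐ[R] A) : A ⊗[R] A →ₐ[R] A ⊗[R] A :=
  Algebra.TensorProduct.map σ (AlgHom.id R A)

/-- The iterates `σ^n` of `σ = σ_A ⊗ id` on `P_A`. -/
def sigmaPow (R A : Type*) [CommRing R] [CommRing A] [Algebra R A]
    (σ : A →ₐ[R] A) : ℕ → (A ⊗[R] A →ₐ[R] A ⊗[R] A)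
  | 0 => AlgHom.id R _
  | n + 1 => (sigmaP R A σ).comp (sigmaPow R A σ n)

/-- The twisted powers `I_A^{(n)} = I_A · σ(I_A) ⋯ σ^{n-1}(I_A)` (with `I_A^{(0)} = P_A`). -/
def twistedPow (R A : Type*) [CommRing R] [CommRing A] [Algebra R A]
    (σ : A →ₐ[R] A) : ℕ → Ideal (A ⊗[R] A)
  | 0 => ⊤
  | n + 1 => twistedPow R A σ n * Ideal.map (sigmaPow R A σ n) (diagIdeal R A)

/-- The ring of twisted principal parts of order `n`: `P_{A,(n)} = P_A / I_A^{(n+1)}`.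
It is an `A`-algebra via the left structure `a ↦ a ⊗ 1`. -/
abbrev Pparts (R A : Type*) [CommRing R] [CommRing A] [Algebra R A]
    (σ : A →ₐ[R] A) (n : ℕ) : Type _ :=
  (A ⊗[R] A) ⧸ twistedPow R A σ (n + 1)

variable (R A : Type*) [CommRing R] [CommRing A] [Algebra R A] (σ : A →ₐ[R] A) (n : ℕ)
  (B : Type*) [CommRing B] [Algebra R B] [Algebra A B]

/-- `B ⊗_A P_{A,(n)}`, the base change of `P_{A,(n)}` along its left `A`-structure. -/
abbrev T1 : Type _ := B ⊗[A] Pparts R A σ n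

/-- The right `A`-structure `a ↦ 1 ⊗ (1 ⊗ a)` on `B ⊗_A P_{A,(n)}`,
coming from the right `A`-algebra structure `a ↦ 1 ⊗ a` of `P_{A,(n)}`. -/
def prightHom : A →+* T1 R A σ n B :=
  (Algebra.TensorProduct.includeRight :
      Pparts R A σ n →ₐ[A] T1 R A σ n B).toRingHom.comp
    ((Ideal.Quotient.mk (twistedPow R A σ (n + 1))).comp
      (Algebra.TensorProduct.includeRight : A →ₐ[R] A ⊗[R] A).toRingHom)

/-- `B ⊗_A P_{A,(n)}`, regarded as an `A`-algebra via the *right* structure of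
`P_{A,(n)}` (type synonym). -/
def T1R : Type _ := T1 R A σ n B

instance : CommRing (T1R R A σ n B) := inferInstanceAs (CommRing (T1 R A σ n B))

noncomputable instance : Algebra A (T1R R A σ n B) := (prightHom R A σ n B).toAlgebra

/-- The identity map, recording the right `A`-structure. -/
def toT1R : T1 R A σ n B → T1R R A σ n B := fun x => x

/-- The triple tensor product `B ⊗_A P_{A,(n)} ⊗_A B`, where the middle factor is an
`(A,A)`-bimodule via `a ↦ a ⊗ 1` on the left and `a ↦ 1 ⊗ a` on the right. -/
abbrev T2 : Type _ := T1R R A σ n B ⊗[A] B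

/-!
Since `B = S⁻¹A`, for `b * s = a` the element `1 ⊗ b - b ⊗ 1` of `P_B` is the image of
`s ⊗ a - a ⊗ s ∈ I_A` divided by the unit `s ⊗ s`, so `I_B = I_A · P_B`. As `σ_B` extends `σ_A`,
the same then holds for all twisted powers: `I_B^{(n+1)} = J · P_B` with `J = I_A^{(n+1)}`.

The first isomorphism is then base change of a quotient, `P_B ⊗_{P_A} P_A/J ≅ P_B/J P_B`.
For the second one, `b ⊗ x ⊗ b' ↦ (b ⊗ 1) x (1 ⊗ b')` and `b ⊗ b' ↦ b ⊗ 1 ⊗ b'` are mutually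
inverse between `B ⊗_A P_A ⊗_A B` and `B ⊗_R B`, and they pass to the quotients by `J`
and by `J · P_B`.
-/

section Functoriality

variable {R A B : Type*} [CommRing R] [CommRing A] [Algebra R A] [CommRing B] [Algebra R B]
  (f : A →ₐ[R] B) {σA : A →ₐ[R] A} {σB : B →ₐ[R] B}

lemma sigmaP_comp_map (h : σB.comp f = f.comp σA) :
    (sigmaP R B σB).comp (Algebra.TensorProduct.map f f) =
      (Algebra.TensorProduct.map f f).comp (sigmaP R A σA) := by
  simp only [sigmaP, ← Algebra.TensorProduct.map_comp, h, AlgHom.id_comp, AlgHom.comp_id]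

lemma sigmaPow_comp_map (h : σB.comp f = f.comp σA) (m : ℕ) :
    (sigmaPow R B σB m).comp (Algebra.TensorProduct.map f f) =
      (Algebra.TensorProduct.map f f).comp (sigmaPow R A σA m) := by
  induction m with
  | zero => rfl
  | succ m ih =>
    simp only [sigmaPow, AlgHom.comp_assoc, ih]
    rw [← AlgHom.comp_assoc, sigmaP_comp_map f h, AlgHom.comp_assoc]

lemma map_twistedPow (h : σB.comp f = f.comp σA)
    (hI : (diagIdeal R A).map (Algebra.TensorProduct.map f f) = diagIdeal R B) (m : ℕ) :
    (twistedPow R A σA m).map (Algebra.TensorProduct.map f f) = twistedPow R B σB m := by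
  induction m with
  | zero => exact Ideal.map_top _
  | succ m ih =>
    rw [twistedPow, twistedPow, Ideal.map_mul, ih, ← hI, Ideal.map_mapₐ, Ideal.map_mapₐ,
      sigmaPow_comp_map f h]

end Functoriality

section Localization

open Algebra.TensorProduct

variable {R A B : Type*} [CommRing R] [CommRing A] [Algebra R A] [CommRing B] [Algebra R B]

lemma map_diagIdeal_le (f : A →ₐ[R] B) : (diagIdeal R A).map (map f f) ≤ diagIdeal R B := by
  have hmul : (lmul' R).comp (map f f) = f.comp (lmul' R) := by ext <;> simp
  rw [Ideal.map_le_iff_le_comap]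
  intro x hx
  simp only [diagIdeal, Ideal.mem_comap, RingHom.mem_ker] at hx ⊢
  rw [← AlgHom.comp_apply, hmul, AlgHom.comp_apply, hx, map_zero]

lemma map_diagIdeal_of_isLocalization [Algebra A B] [IsScalarTower R A B] (S : Submonoid A)
    [IsLocalization S B] :
    (diagIdeal R A).map (map (IsScalarTower.toAlgHom R A B) (IsScalarTower.toAlgHom R A B)) =
      diagIdeal R B := by
  set Φ := map (IsScalarTower.toAlgHom R A B) (IsScalarTower.toAlgHom R A B)
  refine le_antisymm (map_diagIdeal_le _) ?_
  rw [diagIdeal, ← KaehlerDifferential.ideal, ← KaehlerDifferential.span_range_eq_ideal,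
    Ideal.span_le]
  rintro _ ⟨b, rfl⟩
  obtain ⟨⟨a, s⟩, has⟩ := IsLocalization.surj S b
  have hunit : IsUnit (Φ ((s : A) ⊗ₜ[R] (s : A))) := by
    have hs := IsLocalization.map_units B s
    simpa [Φ] using
      (hs.map (includeLeftRingHom (R := R) (B := B))).mul (hs.map (includeRight (R := R) (A := B)))
  have hdiff : Φ ((s : A) ⊗ₜ[R] (s : A)) * (1 ⊗ₜ[R] b - b ⊗ₜ[R] 1) =
      Φ ((s : A) ⊗ₜ[R] a - a ⊗ₜ[R] (s : A)) := by
    simp [Φ, mul_sub, ← has, mul_comm b]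
  have hmem : (s : A) ⊗ₜ[R] a - a ⊗ₜ[R] (s : A) ∈ diagIdeal R A := by
    simp [diagIdeal, mul_comm]
  rw [SetLike.mem_coe, ← Ideal.unit_mul_mem_iff_mem _ hunit, hdiff]
  exact Ideal.mem_map_of_mem _ hmem

end Localization

namespace Algebra.TensorProduct

variable {A X Y C : Type*} [CommSemiring A] [CommSemiring X] [CommSemiring Y] [CommSemiring C]
  [Algebra A X] [Algebra A Y]

def liftRingHom (f : X →+* C) (g : Y →+* C)
    (h : f.comp (algebraMap A X) = g.comp (algebraMap A Y)) : X ⊗[A] Y →+* C :=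
  letI := (f.comp (algebraMap A X)).toAlgebra
  (lift (S := A) ⟨f, fun _ => rfl⟩ ⟨g, fun a => (RingHom.congr_fun h a).symm⟩
    fun _ _ => .all _ _).toRingHom

@[simp]
lemma liftRingHom_tmul (f : X →+* C) (g : Y →+* C)
    (h : f.comp (algebraMap A X) = g.comp (algebraMap A Y)) (x : X) (y : Y) :
    liftRingHom f g h (x ⊗ₜ y) = f x * g y :=
  letI := (f.comp (algebraMap A X)).toAlgebra
  lift_tmul ..

end Algebra.TensorProduct

section TripleTensor

open Algebra.TensorProduct

variable {R A B : Type*} [CommRing R] [CommRing A] [Algebra R A] [CommRing B] [Algebra A B]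
  {σA : A →ₐ[R] A} {n : ℕ}

local notation "Φ" => map (IsScalarTower.toAlgHom R A B) (IsScalarTower.toAlgHom R A B)

lemma algebraMap_tmul_one_eq (a : A) :
    (algebraMap A B a ⊗ₜ[A] (1 : Pparts R A σA n) : T1 R A σA n B) =
      1 ⊗ₜ Ideal.Quotient.mk _ (a ⊗ₜ 1) :=
  tmul_one_eq_one_tmul a

lemma one_tmul_algebraMap_eq (a : A) :
    ((1 : T1R R A σA n B) ⊗ₜ[A] algebraMap A B a : T2 R A σA n B) =
      toT1R R A σA n B (1 ⊗ₜ Ideal.Quotient.mk _ (1 ⊗ₜ a)) ⊗ₜ 1 :=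
  (tmul_one_eq_one_tmul a).symm

variable [Algebra R B] [IsScalarTower R A B] {σB : B →ₐ[R] B}

def ppartsMap (h : (twistedPow R A σA (n + 1)).map Φ ≤ twistedPow R B σB (n + 1)) :
    Pparts R A σA n →+* Pparts R B σB n :=
  Ideal.quotientMap _ (Φ : A ⊗[R] A →+* B ⊗[R] B) (Ideal.map_le_iff_le_comap.mp h)

def baseChangeToPparts (h : (twistedPow R A σA (n + 1)).map Φ ≤ twistedPow R B σB (n + 1)) :
    T1 R A σA n B →+* Pparts R B σB n :=
  liftRingHom ((Ideal.Quotient.mk _).comp includeLeftRingHom) (ppartsMap h) (by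
    ext a
    simp [ppartsMap])

lemma baseChangeToPparts_tmul (h : (twistedPow R A σA (n + 1)).map Φ ≤ twistedPow R B σB (n + 1))
    (b : B) (p : A ⊗[R] A) :
    baseChangeToPparts h (b ⊗ₜ Ideal.Quotient.mk _ p) =
      Ideal.Quotient.mk _ ((b ⊗ₜ 1) * Φ p) := by
  simp [baseChangeToPparts, ppartsMap]

def tripleTensorToPparts (h : (twistedPow R A σA (n + 1)).map Φ ≤ twistedPow R B σB (n + 1)) :
    T2 R A σA n B →+* Pparts R B σB n :=
  liftRingHom (baseChangeToPparts h : T1R R A σA n B →+* _)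
    ((Ideal.Quotient.mk _).comp includeRight.toRingHom) (by
    ext a
    change baseChangeToPparts h (1 ⊗ₜ Ideal.Quotient.mk _ (1 ⊗ₜ a)) = _
    simp [baseChangeToPparts_tmul])

def tensorToTripleTensor : B ⊗[R] B →+* T2 R A σA n B :=
  liftRingHom ((includeLeftRingHom : T1R R A σA n B →+* _).comp includeLeftRingHom)
    includeRight.toRingHom (by
    ext r
    simp only [RingHom.comp_apply, IsScalarTower.algebraMap_apply R A B]
    change toT1R R A σA n B (algebraMap A B (algebraMap R A r) ⊗ₜ[A] 1) ⊗ₜ[A] (1 : B) =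
      ((1 : T1R R A σA n B) ⊗ₜ[A] algebraMap A B (algebraMap R A r) : T2 R A σA n B)
    rw [algebraMap_tmul_one_eq, one_tmul_algebraMap_eq, tmul_one_eq_one_tmul])

@[simp]
lemma tensorToTripleTensor_tmul (b b' : B) :
    tensorToTripleTensor (b ⊗ₜ[R] b') = toT1R R A σA n B (b ⊗ₜ 1) ⊗ₜ[A] b' := by
  rw [tensorToTripleTensor, liftRingHom_tmul]
  exact (tmul_mul_tmul _ _ _ _).trans (by rw [mul_one, one_mul]; rfl)

lemma tensorToTripleTensor_map (p : A ⊗[R] A) :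
    tensorToTripleTensor (Φ p) =
      toT1R R A σA n B (1 ⊗ₜ Ideal.Quotient.mk _ p) ⊗ₜ[A] (1 : B) := by
  suffices (tensorToTripleTensor (σA := σA) (n := n)).comp (Φ : A ⊗[R] A →+* B ⊗[R] B) =
      (includeLeftRingHom : T1R R A σA n B →+* T2 R A σA n B).comp
        ((includeRight : Pparts R A σA n →ₐ[A] T1 R A σA n B).toRingHom.comp
          (Ideal.Quotient.mk _)) from
    RingHom.congr_fun this p
  ext a
  · simp only [AlgHom.toRingHom_eq_coe, RingHom.coe_comp, RingHom.coe_coe, Function.comp_apply,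
      includeLeftRingHom_apply, Algebra.TensorProduct.map_tmul, IsScalarTower.coe_toAlgHom',
      map_one, tensorToTripleTensor_tmul]
    exact congrArg (fun t => toT1R R A σA n B t ⊗ₜ[A] (1 : B)) (algebraMap_tmul_one_eq a)
  · simp only [AlgHom.toRingHom_eq_coe, RingHom.coe_comp, RingHom.coe_coe, Function.comp_apply,
      includeRight_apply, Algebra.TensorProduct.map_tmul, IsScalarTower.coe_toAlgHom', map_one,
      tensorToTripleTensor_tmul]
    exact one_tmul_algebraMap_eq a

def ppartsToTripleTensor (h : twistedPow R B σB (n + 1) ≤ (twistedPow R A σA (n + 1)).map Φ) :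
    Pparts R B σB n →+* T2 R A σA n B :=
  Ideal.Quotient.lift _ tensorToTripleTensor fun x hx => by
    suffices (twistedPow R A σA (n + 1)).map Φ ≤ RingHom.ker (tensorToTripleTensor (σA := σA))
      from this (h hx)
    refine Ideal.map_le_iff_le_comap.mpr fun p hp => ?_
    rw [Ideal.mem_comap, RingHom.mem_ker, tensorToTripleTensor_map,
      Ideal.Quotient.eq_zero_iff_mem.mpr hp, tmul_zero]
    exact zero_tmul _ _

@[simp]
lemma tripleTensorToPparts_tmul
    (h : (twistedPow R A σA (n + 1)).map Φ ≤ twistedPow R B σB (n + 1))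
    (t : T1 R A σA n B) (b : B) :
    tripleTensorToPparts h (toT1R R A σA n B t ⊗ₜ b) =
      baseChangeToPparts h t * Ideal.Quotient.mk _ (1 ⊗ₜ b) :=
  liftRingHom_tmul ..

@[simp]
lemma ppartsToTripleTensor_mk
    (h : twistedPow R B σB (n + 1) ≤ (twistedPow R A σA (n + 1)).map Φ) (x : B ⊗[R] B) :
    ppartsToTripleTensor h (Ideal.Quotient.mk _ x) = tensorToTripleTensor x :=
  Ideal.Quotient.lift_mk ..

lemma tripleTensorToPparts_comp_ppartsToTripleTensor
    (h : (twistedPow R A σA (n + 1)).map Φ = twistedPow R B σB (n + 1)) :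
    (tripleTensorToPparts h.le).comp (ppartsToTripleTensor h.ge) = RingHom.id _ := by
  refine Ideal.Quotient.ringHom_ext (ringHom_ext ?_ ?_) <;> ext b <;>
    simp [baseChangeToPparts, ← one_def]

-- `T1R` is a type synonym, so the tensor product structure of its elements is exposed by `change`.
lemma ppartsToTripleTensor_comp_tripleTensorToPparts
    (h : (twistedPow R A σA (n + 1)).map Φ = twistedPow R B σB (n + 1)) :
    (ppartsToTripleTensor h.ge).comp (tripleTensorToPparts h.le) = RingHom.id _ := by
  refine ringHom_ext (ringHom_ext (R := A) (A := B) (B := Pparts R A σA n) ?_ ?_) ?_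
  · ext b
    change ppartsToTripleTensor h.ge (tripleTensorToPparts h.le
      (toT1R R A σA n B (b ⊗ₜ 1) ⊗ₜ 1)) = toT1R R A σA n B (b ⊗ₜ 1) ⊗ₜ 1
    simp [baseChangeToPparts, ← one_def]
  · refine Ideal.Quotient.ringHom_ext (RingHom.ext fun p => ?_)
    change ppartsToTripleTensor h.ge (tripleTensorToPparts h.le
      (toT1R R A σA n B (1 ⊗ₜ Ideal.Quotient.mk _ p) ⊗ₜ 1)) =
        toT1R R A σA n B (1 ⊗ₜ Ideal.Quotient.mk _ p) ⊗ₜ 1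
    simp [baseChangeToPparts_tmul, ← one_def, tensorToTripleTensor_map]
  · ext b
    change ppartsToTripleTensor h.ge (tripleTensorToPparts h.le (toT1R R A σA n B 1 ⊗ₜ b)) =
      toT1R R A σA n B 1 ⊗ₜ b
    simp [baseChangeToPparts, ← one_def]

def tripleTensorEquivPparts (h : (twistedPow R A σA (n + 1)).map Φ = twistedPow R B σB (n + 1)) :
    T2 R A σA n B ≃+* Pparts R B σB n :=
  RingEquiv.ofRingHom (tripleTensorToPparts h.le) (ppartsToTripleTensor h.ge)
    (tripleTensorToPparts_comp_ppartsToTripleTensor h)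
    (ppartsToTripleTensor_comp_tripleTensorToPparts h)

lemma tripleTensorEquivPparts_apply
    (h : (twistedPow R A σA (n + 1)).map Φ = twistedPow R B σB (n + 1)) (p : A ⊗[R] A) :
    tripleTensorEquivPparts h (toT1R R A σA n B (1 ⊗ₜ Ideal.Quotient.mk _ p) ⊗ₜ[A] 1) =
      Ideal.Quotient.mk _ (Φ p) := by
  simp [tripleTensorEquivPparts, baseChangeToPparts_tmul, ← one_def]

end TripleTensor

theorem stmt6_general (R A B : Type*) [CommRing R] [CommRing A] [Algebra R A]
    [CommRing B] [Algebra R B] [Algebra A B] [IsScalarTower R A B]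
    (S : Submonoid A) [IsLocalization S B]
    (σA : A →ₐ[R] A)
    (σB : B →ₐ[R] B)
    (hσB : σB.comp (IsScalarTower.toAlgHom R A B) =
      (IsScalarTower.toAlgHom R A B).comp σA)
    [alg : Algebra (A ⊗[R] A) (B ⊗[R] B)]
    (halg : algebraMap (A ⊗[R] A) (B ⊗[R] B) =
      (Algebra.TensorProduct.map (IsScalarTower.toAlgHom R A B)
        (IsScalarTower.toAlgHom R A B)).toRingHom)
    (n : ℕ) :
    (∃ e₁ : (B ⊗[R] B) ⊗[A ⊗[R] A] Pparts R A σA n ≃+* Pparts R B σB n,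
        ∀ p : A ⊗[R] A,
          e₁ ((1 : B ⊗[R] B) ⊗ₜ[A ⊗[R] A]
              Ideal.Quotient.mk (twistedPow R A σA (n + 1)) p) =
            Ideal.Quotient.mk (twistedPow R B σB (n + 1))
              (Algebra.TensorProduct.map (IsScalarTower.toAlgHom R A B)
                (IsScalarTower.toAlgHom R A B) p)) ∧
      (∃ e₂ : T2 R A σA n B ≃+* Pparts R B σB n,
        ∀ p : A ⊗[R] A,
          e₂ (toT1R R A σA n B
                ((1 : B) ⊗ₜ[A] Ideal.Quotient.mk (twistedPow R A σA (n + 1)) p)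
              ⊗ₜ[A] (1 : B)) =
            Ideal.Quotient.mk (twistedPow R B σB (n + 1))
              (Algebra.TensorProduct.map (IsScalarTower.toAlgHom R A B)
                (IsScalarTower.toAlgHom R A B) p)) := by
  have hK := map_twistedPow _ hσB (map_diagIdeal_of_isLocalization S) (n + 1)
  refine ⟨?_, tripleTensorEquivPparts hK, tripleTensorEquivPparts_apply hK⟩
  rw [← Ideal.map_coe, ← AlgHom.toRingHom_eq_coe, ← halg] at hK
  refine ⟨(Algebra.TensorProduct.quotIdealMapEquivTensorQuot (B ⊗[R] B)
    (twistedPow R A σA (n + 1))).symm.toRingEquiv.trans (Ideal.quotEquivOfEq hK), fun p => ?_⟩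
  simp [Algebra.smul_def, halg]

/-- For a twisted localization `B = S⁻¹A` of a twisted `R`-algebra `A`, there are
natural ring isomorphisms `P_{B,(n)} ≅ P_B ⊗_{P_A} P_{A,(n)} ≅ B ⊗_A P_{A,(n)} ⊗_A B`
for every `n`. -/
theorem stmt6 (R A B : Type*) [CommRing R] [CommRing A] [Algebra R A]
    [CommRing B] [Algebra R B] [Algebra A B] [IsScalarTower R A B]
    (S : Submonoid A) [IsLocalization S B]
    (σA : A →ₐ[R] A) (hS : ∀ s ∈ S, IsUnit (algebraMap A B (σA s)))
    (σB : B →ₐ[R] B)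
    (hσB : σB.comp (IsScalarTower.toAlgHom R A B) =
      (IsScalarTower.toAlgHom R A B).comp σA)
    [alg : Algebra (A ⊗[R] A) (B ⊗[R] B)]
    (halg : algebraMap (A ⊗[R] A) (B ⊗[R] B) =
      (Algebra.TensorProduct.map (IsScalarTower.toAlgHom R A B)
        (IsScalarTower.toAlgHom R A B)).toRingHom)
    (n : ℕ) :
    (∃ e₁ : (B ⊗[R] B) ⊗[A ⊗[R] A] Pparts R A σA n ≃+* Pparts R B σB n,
        ∀ p : A ⊗[R] A,
          e₁ ((1 : B ⊗[R] B) ⊗ₜ[A ⊗[R] A]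
              Ideal.Quotient.mk (twistedPow R A σA (n + 1)) p) =
            Ideal.Quotient.mk (twistedPow R B σB (n + 1))
              (Algebra.TensorProduct.map (IsScalarTower.toAlgHom R A B)
                (IsScalarTower.toAlgHom R A B) p)) ∧
      (∃ e₂ : T2 R A σA n B ≃+* Pparts R B σB n,
        ∀ p : A ⊗[R] A,
          e₂ (toT1R R A σA n B
                ((1 : B) ⊗ₜ[A] Ideal.Quotient.mk (twistedPow R A σA (n + 1)) p)
              ⊗ₜ[A] (1 : B)) =
            Ideal.Quotient.mk (twistedPow R B σB (n + 1))
              (Algebra.TensorProduct.map (IsScalarTower.toAlgHom R A B)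
                (IsScalarTower.toAlgHom R A B) p)) :=
  stmt6_general R A B S σA σB hσB (alg := alg) halg n

end
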